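/- arXiv:2203.00967 — 2 statements merged into one kernel-verified Lean document; each statement's English description precedes it below -/
import Mathlib

section
/- The function f(ρ) = sum of the m largest eigenvalues of S_B − ρS_W is strictly decreasing in ρ when S_W is symmetric positive definite and S_B is symmetric, and consequently has a unique root. -/
open Matrix Finset

local notation "⟪" x ", " y "⟫" => @inner ℝ _ _ x y

variable {n : ℕ}

-- eigenvector equation in EuclideanSpace
lemma toEL_eig {A : Matrix (Fin n) (Fin n) ℝ} (hA : A.IsHermitian) (j : Fin n) :
    Matrix.toEuclideanLin A (hA.eigenvectorBasis j)
      = hA.eigenvalues j • hA.eigenvectorBasis j := by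
  apply (WithLp.equiv 2 (Fin n → ℝ)).injective
  simp [Matrix.toEuclideanLin_apply, hA.mulVec_eigenvectorBasis j]

lemma quad_expand {A : Matrix (Fin n) (Fin n) ℝ} (hA : A.IsHermitian)
    (x : EuclideanSpace ℝ (Fin n)) :
    ⟪x, Matrix.toEuclideanLin A x⟫
      = ∑ j, hA.eigenvalues j * ⟪hA.eigenvectorBasis j, x⟫ ^ 2 := by
  set B := hA.eigenvectorBasis with hB
  have hTx : Matrix.toEuclideanLin A x
      = ∑ j, (⟪B j, x⟫ * hA.eigenvalues j) • B j := by
    conv_lhs => rw [← B.sum_repr' x]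
    rw [map_sum]
    refine Finset.sum_congr rfl fun j _ => ?_
    rw [_root_.map_smul, toEL_eig hA j, smul_smul]
  rw [hTx, inner_sum]
  refine Finset.sum_congr rfl fun j _ => ?_
  rw [real_inner_smul_right, real_inner_comm x (B j)]
  ring

lemma parseval {x : EuclideanSpace ℝ (Fin n)}
    (B : OrthonormalBasis (Fin n) ℝ (EuclideanSpace ℝ (Fin n))) :
    ∑ j, ⟪B j, x⟫ ^ 2 = ‖x‖ ^ 2 := by
  have := B.sum_inner_mul_inner x x
  rw [real_inner_self_eq_norm_sq] at this
  rw [← this]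
  refine Finset.sum_congr rfl fun j _ => ?_
  rw [real_inner_comm x (B j)]
  ring

lemma card_filter_lt {m : ℕ} (hmn : m ≤ n) :
    (Finset.univ.filter (fun i : Fin n => (i : ℕ) < m)).card = m := by
  have : Finset.univ.filter (fun i : Fin n => (i : ℕ) < m)
      = Finset.image (Fin.castLE hmn) Finset.univ := by
    ext x
    simp only [Finset.mem_filter, Finset.mem_univ, true_and, Finset.mem_image]
    constructor
    · intro hx; exact ⟨⟨x, hx⟩, rfl⟩
    · rintro ⟨i, rfl⟩; exact i.2
  rw [this, Finset.card_image_of_injective _ (Fin.castLE_injective hmn), Finset.card_univ,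
    Fintype.card_fin]

lemma sum_weighted_le {m : ℕ} (hm : 1 ≤ m) (hmn : m ≤ n)
    (w c : Fin n → ℝ) (hw : ∀ i j : Fin n, i ≤ j → w j ≤ w i)
    (hc0 : ∀ j, 0 ≤ c j) (hc1 : ∀ j, c j ≤ 1) (hcs : ∑ j, c j = (m : ℝ)) :
    ∑ j, w j * c j ≤ ∑ j ∈ Finset.univ.filter (fun i : Fin n => (i : ℕ) < m), w j := by
  have hmlt : m - 1 < n := by omega
  set t : ℝ := w ⟨m - 1, hmlt⟩ with ht
  have key : ∑ j, (w j - t) * c j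
      ≤ ∑ j ∈ Finset.univ.filter (fun i : Fin n => (i : ℕ) < m), (w j - t) := by
    rw [← Finset.sum_filter_add_sum_filter_not Finset.univ
      (fun i : Fin n => (i : ℕ) < m) (fun j => (w j - t) * c j)]
    have h1 : ∑ j ∈ Finset.univ.filter (fun i : Fin n => (i : ℕ) < m), (w j - t) * c j
        ≤ ∑ j ∈ Finset.univ.filter (fun i : Fin n => (i : ℕ) < m), (w j - t) := by
      refine Finset.sum_le_sum fun j hj => ?_
      simp only [Finset.mem_filter] at hj
      have hwt : t ≤ w j := hw j ⟨m - 1, hmlt⟩ (by simp [Fin.le_def]; omega)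
      calc (w j - t) * c j ≤ (w j - t) * 1 :=
            mul_le_mul_of_nonneg_left (hc1 j) (by linarith)
        _ = w j - t := mul_one _
    have h2 : ∑ j ∈ Finset.univ.filter (fun i : Fin n => ¬ (i : ℕ) < m), (w j - t) * c j ≤ 0 := by
      refine Finset.sum_nonpos fun j hj => ?_
      simp only [Finset.mem_filter] at hj
      have hwt : w j ≤ t := hw ⟨m - 1, hmlt⟩ j (by simp [Fin.le_def]; omega)
      exact mul_nonpos_of_nonpos_of_nonneg (by linarith) (hc0 j)
    linarith
  have hexp : ∑ j, w j * c j = ∑ j, (w j - t) * c j + t * m := by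
    rw [← hcs, Finset.mul_sum, ← Finset.sum_add_distrib]
    refine Finset.sum_congr rfl fun j _ => by ring
  have hexp2 : ∑ j ∈ Finset.univ.filter (fun i : Fin n => (i : ℕ) < m), (w j - t)
      = (∑ j ∈ Finset.univ.filter (fun i : Fin n => (i : ℕ) < m), w j) - t * m := by
    rw [Finset.sum_sub_distrib, Finset.sum_const, card_filter_lt hmn, nsmul_eq_mul]
    ring
  linarith

lemma kyFan_ub {m : ℕ} (hm : 1 ≤ m) (hmn : m ≤ n)
    {A : Matrix (Fin n) (Fin n) ℝ} (hA : A.IsHermitian)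
    (w : Fin n → ℝ) (hw : ∀ i j : Fin n, i ≤ j → w j ≤ w i)
    (σ : Equiv.Perm (Fin n)) (hwσ : ∀ i, w i = hA.eigenvalues (σ i))
    (u : Fin m → EuclideanSpace ℝ (Fin n)) (hu : Orthonormal ℝ u) :
    ∑ i, ⟪u i, Matrix.toEuclideanLin A (u i)⟫
      ≤ ∑ j ∈ Finset.univ.filter (fun i : Fin n => (i : ℕ) < m), w j := by
  set B := hA.eigenvectorBasis with hB
  set c : Fin n → ℝ := fun j => ∑ i, ⟪B j, u i⟫ ^ 2 with hc
  have hsum : ∑ i, ⟪u i, Matrix.toEuclideanLin A (u i)⟫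
      = ∑ j, hA.eigenvalues j * c j := by
    simp_rw [fun i => quad_expand hA (u i)]
    rw [Finset.sum_comm]
    exact Finset.sum_congr rfl fun j _ => by rw [Finset.mul_sum]
  have hre : ∑ j, hA.eigenvalues j * c j = ∑ j, w j * c (σ j) := by
    rw [← Equiv.sum_comp σ (fun j => hA.eigenvalues j * c j)]
    exact Finset.sum_congr rfl fun j _ => by rw [hwσ j]
  rw [hsum, hre]
  refine sum_weighted_le hm hmn w (fun j => c (σ j)) hw ?_ ?_ ?_
  · intro j; exact Finset.sum_nonneg fun i _ => sq_nonneg _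
  · intro j
    have := hu.sum_inner_products_le (s := Finset.univ) (B (σ j))
    simp only [Real.norm_eq_abs, sq_abs] at this
    calc c (σ j) = ∑ i, ⟪u i, B (σ j)⟫ ^ 2 := by
          exact Finset.sum_congr rfl fun i _ => by rw [real_inner_comm]
      _ ≤ ‖B (σ j)‖ ^ 2 := this
      _ = 1 := by rw [B.orthonormal.1 (σ j)]; norm_num
  · rw [Equiv.sum_comp σ c]
    have h2 : ∑ j, c j = ∑ i : Fin m, ∑ j, ⟪B j, u i⟫ ^ 2 := Finset.sum_comm
    have h3 : ∀ i : Fin m, ∑ j, ⟪B j, u i⟫ ^ 2 = 1 := by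
      intro i
      rw [parseval B, hu.1 i]; norm_num
    rw [h2, Finset.sum_congr rfl fun i _ => h3 i]
    simp

lemma kyFan_achieve {m : ℕ} (hmn : m ≤ n)
    {A : Matrix (Fin n) (Fin n) ℝ} (hA : A.IsHermitian)
    (w : Fin n → ℝ) (σ : Equiv.Perm (Fin n)) (hwσ : ∀ i, w i = hA.eigenvalues (σ i)) :
    ∃ u : Fin m → EuclideanSpace ℝ (Fin n), Orthonormal ℝ u ∧
      ∑ i, ⟪u i, Matrix.toEuclideanLin A (u i)⟫
        = ∑ j ∈ Finset.univ.filter (fun i : Fin n => (i : ℕ) < m), w j := by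
  set B := hA.eigenvectorBasis with hB
  refine ⟨fun i => B (σ (Fin.castLE hmn i)),
    B.orthonormal.comp _ (σ.injective.comp (Fin.castLE_injective hmn)), ?_⟩
  have h1 : ∀ i : Fin m, ⟪B (σ (Fin.castLE hmn i)),
      Matrix.toEuclideanLin A (B (σ (Fin.castLE hmn i)))⟫ = w (Fin.castLE hmn i) := by
    intro i
    rw [toEL_eig hA, real_inner_smul_right, real_inner_self_eq_norm_sq,
      B.orthonormal.1, hwσ]
    norm_num
  simp_rw [h1]
  have himg : Finset.univ.filter (fun i : Fin n => (i : ℕ) < m)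
      = Finset.image (Fin.castLE hmn) Finset.univ := by
    ext x
    simp only [Finset.mem_filter, Finset.mem_univ, true_and, Finset.mem_image]
    constructor
    · intro hx; exact ⟨⟨x, hx⟩, rfl⟩
    · rintro ⟨i, rfl⟩; exact i.2
  rw [himg, Finset.sum_image (fun a _ b _ h => Fin.castLE_injective hmn h)]

/-- The sum `f(ρ)` of the `m` largest eigenvalues of `S_B − ρS_W` is strictly decreasing
in `ρ` when `S_W` is symmetric positive definite (and `S_B` symmetric PSD), and hence
has a unique root. -/
theorem sum_largest_eigenvalues_strictAnti {n m : ℕ}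
    (hn : 0 < n) (hm : 1 ≤ m) (hmn : m ≤ n)
    (SB SW : Matrix (Fin n) (Fin n) ℝ) (hSB : SB.PosSemidef) (hSW : SW.PosDef)
    (lam : ℝ → Fin n → ℝ)
    (hsort : ∀ ρ : ℝ, ∀ i j : Fin n, i ≤ j → lam ρ j ≤ lam ρ i)
    (heig : ∀ ρ : ℝ, ∃ (hH : (SB - ρ • SW).IsHermitian) (σ : Equiv.Perm (Fin n)),
      ∀ i, lam ρ i = hH.eigenvalues (σ i))
    (f : ℝ → ℝ)
    (hf : ∀ ρ : ℝ, f ρ = ∑ i ∈ Finset.univ.filter (fun i : Fin n => (i : ℕ) < m), lam ρ i) :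
    StrictAnti f ∧ ∃! ρ : ℝ, f ρ = 0 := by
  have hnE : Nonempty (Fin n) := Fin.pos_iff_nonempty.mp hn
  set E := EuclideanSpace ℝ (Fin n)
  set hW : SW.IsHermitian := hSW.1 with hWdef
  set μ : Fin n → ℝ := hW.eigenvalues with hμdef
  obtain ⟨j0, -, hj0⟩ := Finset.exists_min_image Finset.univ μ Finset.univ_nonempty
  set μ0 : ℝ := μ j0 with hμ0def
  have hμ0 : 0 < μ0 := hSW.eigenvalues_pos j0
  set C : ℝ := ∑ j, μ j with hCdef
  have hμnn : ∀ j, 0 ≤ μ j := fun j => (hSW.eigenvalues_pos j).le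
  have hCnn : 0 ≤ C := Finset.sum_nonneg fun j _ => hμnn j
  -- bounds on the quadratic form of SW on unit vectors
  have hqW_lb : ∀ x : E, ‖x‖ = 1 → μ0 ≤ ⟪x, Matrix.toEuclideanLin SW x⟫ := by
    intro x hx
    rw [quad_expand hW x]
    calc μ0 = μ0 * ∑ j, ⟪hW.eigenvectorBasis j, x⟫ ^ 2 := by
          rw [parseval hW.eigenvectorBasis, hx]; norm_num
      _ = ∑ j, μ0 * ⟪hW.eigenvectorBasis j, x⟫ ^ 2 := Finset.mul_sum _ _ _
      _ ≤ ∑ j, μ j * ⟪hW.eigenvectorBasis j, x⟫ ^ 2 :=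
          Finset.sum_le_sum fun j _ =>
            mul_le_mul_of_nonneg_right (hj0 j (Finset.mem_univ j)) (sq_nonneg _)
  have hqW_ub : ∀ x : E, ‖x‖ = 1 → ⟪x, Matrix.toEuclideanLin SW x⟫ ≤ C := by
    intro x hx
    rw [quad_expand hW x]
    refine Finset.sum_le_sum fun j _ => ?_
    have h1 : |⟪hW.eigenvectorBasis j, x⟫| ≤ 1 := by
      have := abs_real_inner_le_norm (hW.eigenvectorBasis j) x
      rw [hW.eigenvectorBasis.orthonormal.1 j, hx] at this
      simpa using this
    have h2 : ⟪hW.eigenvectorBasis j, x⟫ ^ 2 ≤ 1 := by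
      rw [← sq_abs]
      nlinarith [abs_nonneg (⟪hW.eigenvectorBasis j, x⟫ : ℝ)]
    nlinarith [hμnn j]
  -- decomposition of the quadratic form of SB - ρ•SW
  have hT : ∀ (ρ : ℝ) (x : E), ⟪x, Matrix.toEuclideanLin (SB - ρ • SW) x⟫
      = ⟪x, Matrix.toEuclideanLin SB x⟫ - ρ * ⟪x, Matrix.toEuclideanLin SW x⟫ := by
    intro ρ x
    rw [map_sub, _root_.map_smul, LinearMap.sub_apply, LinearMap.smul_apply,
      inner_sub_right, real_inner_smul_right]
  -- Ky Fan characterization for each ρ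
  have key_ub : ∀ (ρ : ℝ) (u : Fin m → E), Orthonormal ℝ u →
      ∑ i, ⟪u i, Matrix.toEuclideanLin (SB - ρ • SW) (u i)⟫ ≤ f ρ := by
    intro ρ u hu
    obtain ⟨hH, σ, hσ⟩ := heig ρ
    rw [hf ρ]
    exact kyFan_ub hm hmn hH (lam ρ) (hsort ρ) σ hσ u hu
  have key_ach : ∀ ρ : ℝ, ∃ u : Fin m → E, Orthonormal ℝ u ∧
      ∑ i, ⟪u i, Matrix.toEuclideanLin (SB - ρ • SW) (u i)⟫ = f ρ := by
    intro ρ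
    obtain ⟨hH, σ, hσ⟩ := heig ρ
    obtain ⟨u, hu, hval⟩ := kyFan_achieve hmn hH (lam ρ) σ hσ
    exact ⟨u, hu, by rw [hval, hf ρ]⟩
  -- sum of SW-quadratic forms over an orthonormal family
  have hWsum : ∀ u : Fin m → E, Orthonormal ℝ u →
      (m : ℝ) * μ0 ≤ ∑ i, ⟪u i, Matrix.toEuclideanLin SW (u i)⟫ ∧
      ∑ i, ⟪u i, Matrix.toEuclideanLin SW (u i)⟫ ≤ (m : ℝ) * C := by
    intro u hu
    constructor
    · calc (m : ℝ) * μ0 = ∑ _i : Fin m, μ0 := by rw [Finset.sum_const]; simp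
        _ ≤ _ := Finset.sum_le_sum fun i _ => hqW_lb (u i) (hu.1 i)
    · calc ∑ i, ⟪u i, Matrix.toEuclideanLin SW (u i)⟫
          ≤ ∑ _i : Fin m, C := Finset.sum_le_sum fun i _ => hqW_ub (u i) (hu.1 i)
        _ = (m : ℝ) * C := by rw [Finset.sum_const]; simp
  -- two-sided slope bounds
  have bound : ∀ a b : ℝ, a ≤ b →
      f b ≤ f a - (b - a) * ((m : ℝ) * μ0) ∧ f a - (b - a) * ((m : ℝ) * C) ≤ f b := by
    intro a b hab
    constructor
    · obtain ⟨u, hu, hub⟩ := key_ach b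
      have h1 := key_ub a u hu
      simp_rw [hT a] at h1
      simp_rw [hT b] at hub
      rw [Finset.sum_sub_distrib, ← Finset.mul_sum] at h1 hub
      have h2 := (hWsum u hu).1
      nlinarith [h2, sub_nonneg.mpr hab]
    · obtain ⟨u, hu, hua⟩ := key_ach a
      have h1 := key_ub b u hu
      simp_rw [hT b] at h1
      simp_rw [hT a] at hua
      rw [Finset.sum_sub_distrib, ← Finset.mul_sum] at h1 hua
      have h2 := (hWsum u hu).2
      nlinarith [h2, sub_nonneg.mpr hab]
  have hmμ0 : 0 < (m : ℝ) * μ0 := by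
    have : (0:ℝ) < m := by exact_mod_cast hm
    positivity
  have hanti : StrictAnti f := by
    intro a b hab
    have h := (bound a b hab.le).1
    nlinarith [sub_pos.mpr hab]
  refine ⟨hanti, ?_⟩
  -- continuity via Lipschitz
  have hlip : LipschitzWith (Real.toNNReal ((m : ℝ) * C)) f := by
    refine LipschitzWith.of_dist_le_mul fun x y => ?_
    have hcoe : ((Real.toNNReal ((m : ℝ) * C) : NNReal) : ℝ) = (m : ℝ) * C :=
      Real.coe_toNNReal _ (by positivity)
    rw [Real.dist_eq, Real.dist_eq, hcoe]
    rcases le_total x y with h | h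
    · obtain ⟨h1, h2⟩ := bound x y h
      have h3 : 0 ≤ (y - x) * ((m : ℝ) * μ0) := mul_nonneg (by linarith) hmμ0.le
      rw [abs_of_nonneg (by linarith : (0:ℝ) ≤ f x - f y),
        abs_of_nonpos (by linarith : x - y ≤ 0)]
      nlinarith
    · obtain ⟨h1, h2⟩ := bound y x h
      have h3 : 0 ≤ (x - y) * ((m : ℝ) * μ0) := mul_nonneg (by linarith) hmμ0.le
      rw [abs_of_nonpos (by linarith : f x - f y ≤ 0),
        abs_of_nonneg (by linarith : (0:ℝ) ≤ x - y)]
      nlinarith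
  -- f 0 ≥ 0
  have hf0 : 0 ≤ f 0 := by
    obtain ⟨hH, σ, hσ⟩ := heig 0
    have hM : SB - (0 : ℝ) • SW = SB := by simp
    have hpsd : (SB - (0 : ℝ) • SW).PosSemidef := by rw [hM]; exact hSB
    rw [hf 0]
    refine Finset.sum_nonneg fun i _ => ?_
    rw [hσ i]
    exact hpsd.eigenvalues_nonneg (σ i)
  -- large ρ makes f negative
  have hA : 0 ≤ f 0 / ((m : ℝ) * μ0) := div_nonneg hf0 hmμ0.le
  obtain ⟨R, hR0, hfR⟩ : ∃ R : ℝ, 0 ≤ R ∧ f R ≤ 0 := by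
    refine ⟨f 0 / ((m : ℝ) * μ0) + 1, by linarith, ?_⟩
    have h := (bound 0 (f 0 / ((m : ℝ) * μ0) + 1) (by linarith)).1
    have heq : (f 0 / ((m : ℝ) * μ0) + 1 - 0) * ((m : ℝ) * μ0) = f 0 + (m : ℝ) * μ0 := by
      rw [sub_zero, add_mul, one_mul, div_mul_cancel₀ _ hmμ0.ne']
    linarith
  obtain ⟨ρ, -, hρ⟩ := intermediate_value_Icc' hR0 hlip.continuous.continuousOn
    (Set.mem_Icc.mpr ⟨hfR, hf0⟩)
  exact ⟨ρ, hρ, fun y hy => hanti.injective (by rw [hy, hρ])⟩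
end

section
/- If S_W is symmetric positive definite and S_B symmetric positive semidefinite, then the ratio trace problem max_{V} Tr((VᵀS_W V)⁻¹(VᵀS_B V)) over full-rank V ∈ ℝ^{n×m} is solved by taking the columns of V to be eigenvectors of S_W⁻¹S_B associated with its m largest eigenvalues, and the optimal value equals the sum of the m largest eigenvalues of S_W⁻¹S_B. -/
/-!
Write `S_W = W⁻ᵀ W⁻¹` and `S_B = W⁻ᵀ diag(μ) W⁻¹`. Substituting `V = W U` turns the ratio trace
into `Tr((UᵀU)⁻¹ Uᵀ diag(μ) U) = ∑ μᵢ Pᵢᵢ`, where `P = U (UᵀU)⁻¹ Uᵀ` is the orthogonal projection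
onto the column space of `U`. Its diagonal entries lie in `[0, 1]` and sum to `tr P = m`, and
under these constraints `∑ μᵢ Pᵢᵢ` is largest when the weight sits on the `m` largest `μᵢ`.
The first `m` columns of `W` attain this value and are eigenvectors of `S_W⁻¹ S_B`.
-/

open Matrix Finset

lemma sum_mul_le_sum_of_threshold {ι : Type*} [Fintype ι] (s : Finset ι) {μ p : ι → ℝ} (c : ℝ)
    (hs : ∀ i ∈ s, c ≤ μ i) (hsc : ∀ i ∉ s, μ i ≤ c)
    (hp0 : ∀ i, 0 ≤ p i) (hp1 : ∀ i, p i ≤ 1) (hsum : ∑ i, p i = #s) :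
    ∑ i, μ i * p i ≤ ∑ i ∈ s, μ i := by
  classical
  set q : ι → ℝ := fun i => if i ∈ s then 1 else 0
  have hq : ∑ i, q i = #s := by simp [q]
  have hμq : ∑ i, μ i * q i = ∑ i ∈ s, μ i := by simp [q]
  have hterm : ∑ i, (μ i - c) * (p i - q i) ≤ 0 := sum_nonpos fun i _ => by
    by_cases hi : i ∈ s
    · simp only [q, if_pos hi]
      exact mul_nonpos_of_nonneg_of_nonpos (by linarith [hs i hi]) (by linarith [hp1 i])
    · simp only [q, if_neg hi, sub_zero]
      exact mul_nonpos_of_nonpos_of_nonneg (by linarith [hsc i hi]) (hp0 i)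
  have hexpand : ∑ i, (μ i - c) * (p i - q i)
      = ∑ i, μ i * p i - ∑ i, μ i * q i - c * (∑ i, p i - ∑ i, q i) := by
    simp only [sub_mul, mul_sub, sum_sub_distrib, ← mul_sum]
    ring
  rw [hsum, hq, sub_self, mul_zero, sub_zero, hμq] at hexpand
  linarith

lemma Antitone.exists_threshold {n : ℕ} {μ : Fin n → ℝ} (hμ : Antitone μ) (m : ℕ) :
    ∃ c, (∀ i : Fin n, (i : ℕ) < m → c ≤ μ i) ∧ ∀ i : Fin n, m ≤ i → μ i ≤ c := by
  cases n with
  | zero => exact ⟨0, fun i => i.elim0, fun i => i.elim0⟩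
  | succ n =>
    refine ⟨μ ⟨min m n, by omega⟩, fun i hi => hμ ?_, fun i hi => hμ ?_⟩ <;>
      simp only [Fin.le_def] <;> omega

lemma Fin.mem_map_castLEEmb {n m : ℕ} (hmn : m ≤ n) (i : Fin n) :
    i ∈ univ.map (Fin.castLEEmb hmn) ↔ (i : ℕ) < m := by
  simp only [mem_map, mem_univ, true_and, Fin.castLEEmb_apply]
  exact ⟨fun ⟨j, hj⟩ => hj ▸ j.isLt, fun h => ⟨⟨i, h⟩, rfl⟩⟩

lemma Antitone.sum_mul_le_sum_castLE {n m : ℕ} (hmn : m ≤ n) {μ p : Fin n → ℝ} (hμ : Antitone μ)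
    (hp0 : ∀ i, 0 ≤ p i) (hp1 : ∀ i, p i ≤ 1) (hsum : ∑ i, p i = m) :
    ∑ i, μ i * p i ≤ ∑ i : Fin m, μ (Fin.castLE hmn i) := by
  obtain ⟨c, hc_top, hc_bot⟩ := hμ.exists_threshold m
  have h := sum_mul_le_sum_of_threshold (univ.map (Fin.castLEEmb hmn)) c
    (fun i hi => hc_top i ((Fin.mem_map_castLEEmb hmn i).1 hi))
    (fun i hi => hc_bot i (not_lt.1 (mt (Fin.mem_map_castLEEmb hmn i).2 hi))) hp0 hp1
    (by rw [hsum, card_map, card_univ, Fintype.card_fin])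
  rwa [sum_map] at h

lemma diag_mem_Icc_of_isSymm_of_isIdempotentElem {ι : Type*} [Fintype ι] {B : Matrix ι ι ℝ}
    (hsymm : B.IsSymm) (hidem : IsIdempotentElem B) (i : ι) : B i i ∈ Set.Icc 0 1 := by
  have hsq : B i i = ∑ k, B i k ^ 2 := by
    conv_lhs => rw [← hidem.eq, mul_apply]
    exact sum_congr rfl fun k _ => by rw [← hsymm.apply i k, sq]
  have hsq_le : B i i ^ 2 ≤ B i i := by
    conv_rhs => rw [hsq]
    exact single_le_sum (f := fun k => B i k ^ 2) (fun k _ => sq_nonneg _) (mem_univ i)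
  have hnonneg : 0 ≤ B i i := hsq ▸ sum_nonneg fun k _ => sq_nonneg _
  exact ⟨hnonneg, by nlinarith⟩

lemma trace_diagonal_mul {ι : Type*} [Fintype ι] [DecidableEq ι] (d : ι → ℝ)
    (B : Matrix ι ι ℝ) : (diagonal d * B).trace = ∑ i, d i * B i i := by
  simp [trace, diagonal_mul]

lemma isUnit_of_rank_eq_card {κ : Type*} [Fintype κ] [DecidableEq κ] (A : Matrix κ κ ℝ)
    (h : A.rank = Fintype.card κ) : IsUnit A := by
  rw [← mulVec_surjective_iff_isUnit]
  have hrange : LinearMap.range A.mulVecLin = ⊤ :=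
    Submodule.eq_top_of_finrank_eq (by rw [← rank, h, Module.finrank_fintype_fun_eq_card])
  exact LinearMap.range_eq_top.1 hrange

section GramProjection

variable {ι κ : Type*} [Fintype ι] [Fintype κ] [DecidableEq κ] (U : Matrix ι κ ℝ)

noncomputable def colProj : Matrix ι ι ℝ := U * (Uᵀ * U)⁻¹ * Uᵀ

lemma isSymm_colProj : (colProj U).IsSymm := by
  simp only [IsSymm, colProj, transpose_mul, transpose_transpose, transpose_nonsing_inv,
    Matrix.mul_assoc]

variable {U}

lemma isIdempotentElem_colProj (hU : IsUnit (Uᵀ * U)) : IsIdempotentElem (colProj U) := by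
  have hinv : (Uᵀ * U)⁻¹ * (Uᵀ * U) = 1 := nonsing_inv_mul _ ((isUnit_iff_isUnit_det _).1 hU)
  calc colProj U * colProj U = U * ((Uᵀ * U)⁻¹ * (Uᵀ * U)) * (Uᵀ * U)⁻¹ * Uᵀ := by
        simp only [colProj, Matrix.mul_assoc]
    _ = colProj U := by rw [hinv, Matrix.mul_one, colProj]

lemma trace_colProj (hU : IsUnit (Uᵀ * U)) : (colProj U).trace = Fintype.card κ := by
  rw [colProj, trace_mul_cycle, mul_nonsing_inv _ ((isUnit_iff_isUnit_det _).1 hU), trace_one]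

lemma trace_inv_gram_mul (D : Matrix ι ι ℝ) :
    ((Uᵀ * U)⁻¹ * (Uᵀ * D * U)).trace = (D * colProj U).trace := by
  calc ((Uᵀ * U)⁻¹ * (Uᵀ * D * U)).trace = ((Uᵀ * U)⁻¹ * Uᵀ * D * U).trace := by
        simp only [Matrix.mul_assoc]
    _ = (U * ((Uᵀ * U)⁻¹ * Uᵀ) * D).trace := by
        rw [trace_mul_comm, Matrix.mul_assoc, Matrix.mul_assoc, Matrix.mul_assoc]
    _ = (D * colProj U).trace := by rw [trace_mul_comm, colProj, Matrix.mul_assoc U]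

lemma isUnit_gram_of_rank_eq_card (hU : U.rank = Fintype.card κ) : IsUnit (Uᵀ * U) :=
  isUnit_of_rank_eq_card _ (by rw [rank_transpose_mul_self, hU])

end GramProjection

lemma trace_inv_gram_mul_diagonal_le {n m : ℕ} (hmn : m ≤ n) {μ : Fin n → ℝ} (hμ : Antitone μ)
    {U : Matrix (Fin n) (Fin m) ℝ} (hU : U.rank = m) :
    ((Uᵀ * U)⁻¹ * (Uᵀ * diagonal μ * U)).trace ≤ ∑ i : Fin m, μ (Fin.castLE hmn i) := by
  have hG := isUnit_gram_of_rank_eq_card (hU.trans (Fintype.card_fin m).symm)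
  have hP := diag_mem_Icc_of_isSymm_of_isIdempotentElem (isSymm_colProj U)
    (isIdempotentElem_colProj hG)
  rw [trace_inv_gram_mul, trace_diagonal_mul]
  refine hμ.sum_mul_le_sum_castLE hmn (fun i => (hP i).1) (fun i => (hP i).2) ?_
  simpa [trace] using trace_colProj hG

section SimultaneousDiagonalization

variable {ι κ : Type*} [Fintype ι]

lemma transpose_mul_mul_mul_self (S W : Matrix ι ι ℝ) (U : Matrix ι κ ℝ) :
    (W * U)ᵀ * S * (W * U) = Uᵀ * (Wᵀ * S * W) * U := by
  simp only [transpose_mul, Matrix.mul_assoc]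

lemma submatrix_transpose_mul_mul_submatrix (S W : Matrix ι ι ℝ) (f : κ → ι) :
    (W.submatrix id f)ᵀ * S * W.submatrix id f = (Wᵀ * S * W).submatrix f f := by
  ext i j
  simp [mul_apply, Finset.sum_mul]

lemma submatrix_mul_diagonal [Fintype κ] [DecidableEq ι] [DecidableEq κ] (W : Matrix ι ι ℝ)
    (d : ι → ℝ) (f : κ → ι) :
    (W * diagonal d).submatrix id f = W.submatrix id f * diagonal (d ∘ f) := by
  ext i j
  simp [mul_diagonal]

lemma rank_eq_card_of_transpose_mul_mul_eq_one [Fintype κ] [DecidableEq κ] {S : Matrix ι ι ℝ}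
    {V : Matrix ι κ ℝ} (hV : Vᵀ * S * V = 1) : V.rank = Fintype.card κ :=
  le_antisymm V.rank_le_card_width (by
    simpa [hV, rank_one] using rank_mul_le_right (Vᵀ * S) V)

variable [DecidableEq ι] {S W : Matrix ι ι ℝ}

lemma isUnit_det_of_transpose_mul_mul_eq_one (hW : Wᵀ * S * W = 1) : IsUnit W.det :=
  (isUnit_iff_isUnit_det W).1 (IsUnit.of_mul_eq_one_right _ hW)

lemma inv_eq_mul_transpose_of_transpose_mul_mul_eq_one (hW : Wᵀ * S * W = 1) : S⁻¹ = W * Wᵀ :=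
  inv_eq_left_inv (by rw [Matrix.mul_assoc, mul_eq_one_comm.1 hW])

end SimultaneousDiagonalization

theorem ratioTrace_solution_general {n m : ℕ} (hmn : m ≤ n)
    (SB SW : Matrix (Fin n) (Fin n) ℝ)
    (W : Matrix (Fin n) (Fin n) ℝ) (μ : Fin n → ℝ)
    (hW1 : Wᵀ * SW * W = 1) (hW2 : Wᵀ * SB * W = Matrix.diagonal μ)
    (hsort : ∀ i j : Fin n, i ≤ j → μ j ≤ μ i) :
    IsGreatest
      {t : ℝ | ∃ V : Matrix (Fin n) (Fin m) ℝ, V.rank = m ∧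
        t = ((Vᵀ * SW * V)⁻¹ * (Vᵀ * SB * V)).trace}
      (∑ i : Fin m, μ (Fin.castLE hmn i)) ∧
    ((W.submatrix id (Fin.castLE hmn)).rank = m ∧
      SW⁻¹ * SB * W.submatrix id (Fin.castLE hmn)
        = W.submatrix id (Fin.castLE hmn) *
            Matrix.diagonal (fun i : Fin m => μ (Fin.castLE hmn i)) ∧
      (((W.submatrix id (Fin.castLE hmn))ᵀ * SW * W.submatrix id (Fin.castLE hmn))⁻¹ *
          ((W.submatrix id (Fin.castLE hmn))ᵀ * SB * W.submatrix id (Fin.castLE hmn))).trace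
        = ∑ i : Fin m, μ (Fin.castLE hmn i)) := by
  set V₀ := W.submatrix id (Fin.castLE hmn)
  have hf := Fin.castLE_injective hmn
  have hV₀SW : V₀ᵀ * SW * V₀ = 1 := by
    rw [submatrix_transpose_mul_mul_submatrix, hW1, submatrix_one _ hf]
  have hV₀SB : V₀ᵀ * SB * V₀ = diagonal (μ ∘ Fin.castLE hmn) := by
    rw [submatrix_transpose_mul_mul_submatrix, hW2, submatrix_diagonal _ _ hf]
  have hV₀rank : V₀.rank = m :=
    (rank_eq_card_of_transpose_mul_mul_eq_one hV₀SW).trans (Fintype.card_fin m)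
  have hV₀trace : ((V₀ᵀ * SW * V₀)⁻¹ * (V₀ᵀ * SB * V₀)).trace = ∑ i, μ (Fin.castLE hmn i) := by
    rw [hV₀SW, hV₀SB, inv_one, Matrix.one_mul, trace_diagonal, Function.comp_def]
  have hV₀eigen : SW⁻¹ * SB * V₀ = V₀ * diagonal (μ ∘ Fin.castLE hmn) := by
    calc SW⁻¹ * SB * V₀ = (W * (Wᵀ * SB * W)).submatrix id (Fin.castLE hmn) := by
          rw [inv_eq_mul_transpose_of_transpose_mul_mul_eq_one hW1]
          simp only [Matrix.mul_assoc]
          rfl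
      _ = V₀ * diagonal (μ ∘ Fin.castLE hmn) := by rw [hW2, submatrix_mul_diagonal]
  refine ⟨⟨⟨V₀, hV₀rank, hV₀trace.symm⟩, ?_⟩, hV₀rank, hV₀eigen, hV₀trace⟩
  rintro t ⟨V, hV, rfl⟩
  have hWdet := isUnit_det_of_transpose_mul_mul_eq_one hW1
  obtain ⟨U, rfl, hU⟩ : ∃ U : Matrix (Fin n) (Fin m) ℝ, V = W * U ∧ U.rank = m :=
    ⟨W⁻¹ * V, by rw [← Matrix.mul_assoc, mul_nonsing_inv _ hWdet, Matrix.one_mul],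
      by rw [rank_mul_eq_right_of_isUnit_det _ _ (isUnit_nonsing_inv_det _ hWdet), hV]⟩
  rw [transpose_mul_mul_mul_self, transpose_mul_mul_mul_self, hW1, hW2, Matrix.mul_one]
  exact trace_inv_gram_mul_diagonal_le hmn hsort hU

/-- The ratio trace problem `max_V Tr((VᵀS_WV)⁻¹(VᵀS_BV))` over full-rank `V ∈ ℝ^{n×m}`
is solved by the eigenvectors of `S_W⁻¹S_B` for its `m` largest eigenvalues, with optimal
value the sum of the `m` largest eigenvalues. Here `(W, μ)` is a simultaneous
diagonalization: `WᵀS_WW = I`, `WᵀS_BW = diag(μ)` with `μ` sorted decreasingly. -/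
theorem ratioTrace_solution {n m : ℕ} (hm : 1 ≤ m) (hmn : m ≤ n)
    (SB SW : Matrix (Fin n) (Fin n) ℝ) (hSW : SW.PosDef) (hSB : SB.PosSemidef)
    (W : Matrix (Fin n) (Fin n) ℝ) (μ : Fin n → ℝ)
    (hW1 : Wᵀ * SW * W = 1) (hW2 : Wᵀ * SB * W = Matrix.diagonal μ)
    (hsort : ∀ i j : Fin n, i ≤ j → μ j ≤ μ i) :
    IsGreatest
      {t : ℝ | ∃ V : Matrix (Fin n) (Fin m) ℝ, V.rank = m ∧
        t = ((Vᵀ * SW * V)⁻¹ * (Vᵀ * SB * V)).trace}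
      (∑ i : Fin m, μ (Fin.castLE hmn i)) ∧
    ((W.submatrix id (Fin.castLE hmn)).rank = m ∧
      SW⁻¹ * SB * W.submatrix id (Fin.castLE hmn)
        = W.submatrix id (Fin.castLE hmn) *
            Matrix.diagonal (fun i : Fin m => μ (Fin.castLE hmn i)) ∧
      (((W.submatrix id (Fin.castLE hmn))ᵀ * SW * W.submatrix id (Fin.castLE hmn))⁻¹ *
          ((W.submatrix id (Fin.castLE hmn))ᵀ * SB * W.submatrix id (Fin.castLE hmn))).trace
        = ∑ i : Fin m, μ (Fin.castLE hmn i)) :=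
  ratioTrace_solution_general hmn SB SW W μ hW1 hW2 hsort
end
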